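/- Let |+⟩ := (|0⟩+|1⟩)/√2 in ℂ², and for ω ∈ ℝ let |χ_ω⟩ := (|0⟩ + e^{iω}|1⟩)/√2 ⊗ |1⟩ in ℂ²⊗ℂ². Define the 4×4 density matrices ρ₀ := (1/2)(|0⟩⟨0| + |1⟩⟨1|) ⊗ |+⟩⟨+| and ρ₁ := (1/2)(|+⟩⟨+| ⊗ |0⟩⟨0| + |χ_ω⟩⟨χ_ω|). Then the eigenvalues of ρ(ω) := (1/2)(ρ₀ + ρ₁) are (1/4)(1 + cos(ω/4)), (1/4)(1 − cos(ω/4)), (1/4)(1 + sin(ω/4)), and (1/4)(1 − sin(ω/4)). -/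

import Mathlib

open scoped BigOperators Kronecker
open Matrix

noncomputable section

/-- Rank-one outer product `|φ⟩⟨φ|`. -/
def outer {n : Type*} (φ : n → ℂ) : Matrix n n ℂ :=
  fun i j => φ i * (starRingEnd ℂ) (φ j)

/-- `|0⟩ ∈ ℂ²`. -/
def ket0 : Fin 2 → ℂ := fun i => if i = 0 then 1 else 0

/-- `|1⟩ ∈ ℂ²`. -/
def ket1 : Fin 2 → ℂ := fun i => if i = 1 then 1 else 0

/-- `|+⟩ = (|0⟩ + |1⟩)/√2 ∈ ℂ²`. -/
def ketPlus : Fin 2 → ℂ := fun _ => 1 / (Real.sqrt 2 : ℂ)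

/-- `|χ_ω⟩ = ((|0⟩ + e^{iω}|1⟩)/√2) ⊗ |1⟩ ∈ ℂ² ⊗ ℂ²`. -/
def ketChi (ω : ℝ) : Fin 2 × Fin 2 → ℂ := fun p =>
  ((if p.1 = 0 then 1 else Complex.exp ((ω : ℂ) * Complex.I)) / (Real.sqrt 2 : ℂ)) *
    (if p.2 = 1 then 1 else 0)

/-- `ρ₀ = (1/2)(|0⟩⟨0| + |1⟩⟨1|) ⊗ |+⟩⟨+|`. -/
def rho0 : Matrix (Fin 2 × Fin 2) (Fin 2 × Fin 2) ℂ :=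
  (1 / 2 : ℂ) • ((outer ket0 + outer ket1) ⊗ₖ outer ketPlus)

/-- `ρ₁ = (1/2)(|+⟩⟨+| ⊗ |0⟩⟨0| + |χ_ω⟩⟨χ_ω|)`. -/
def rho1 (ω : ℝ) : Matrix (Fin 2 × Fin 2) (Fin 2 × Fin 2) ℂ :=
  (1 / 2 : ℂ) • (outer ketPlus ⊗ₖ outer ket0 + outer (ketChi ω))

/-! `ρ(ω)` is a positive combination of rank-one projectors, hence Hermitian. In the basis
`|00⟩, |01⟩, |10⟩, |11⟩` it equals `1/4 + A/8`, where `A` is the adjacency matrix of the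
4-cycle `00 – 01 – 11 – 10 – 00` carrying the phase `e^{iω}` on the edge `01 – 11`. Since
`|e^{iω}| = 1`, the characteristic polynomial of `A` is `y⁴ - 4y² + 2 - 2 cos ω`, and
`2 - 2 cos ω = 16 sin²(ω/4) cos²(ω/4)` factors it as
`(y² - 4 cos²(ω/4)) (y² - 4 sin²(ω/4))`. -/

open Polynomial

namespace Matrix.IsHermitian

variable {𝕜 n : Type*} [RCLike 𝕜] [Fintype n] [DecidableEq n]

theorem eigenvalues_eq_of_charpoly_eq {A : Matrix n n 𝕜} (hA : A.IsHermitian) {s : Multiset ℝ}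
    (h : A.charpoly = (s.map fun a : ℝ => X - C (a : 𝕜)).prod) :
    Finset.univ.val.map hA.eigenvalues = s := by
  apply Multiset.map_injective (RCLike.ofReal_injective (K := 𝕜))
  rw [Multiset.map_map, ← hA.roots_charpoly_eq_eigenvalues, h]
  simpa [Multiset.map_map] using roots_multiset_prod_X_sub_C (s.map (RCLike.ofReal : ℝ → 𝕜))

end Matrix.IsHermitian

open ComplexOrder in
theorem posSemidef_outer {n : Type*} [Finite n] (φ : n → ℂ) : (outer φ).PosSemidef :=
  Matrix.posSemidef_vecMulVec_self_star φ

open ComplexOrder in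
theorem posSemidef_rho_omega (ω : ℝ) : ((1 / 2 : ℂ) • (rho0 + rho1 ω)).PosSemidef := by
  have half : (0 : ℂ) ≤ 1 / 2 := by positivity
  refine .smul (.add ?_ ?_) half
  · exact .smul (((posSemidef_outer _).add (posSemidef_outer _)).kronecker
      (posSemidef_outer _)) half
  · exact .smul (((posSemidef_outer _).kronecker (posSemidef_outer _)).add
      (posSemidef_outer _)) half

theorem Complex.exp_ofReal_mul_I_mul_conj (x : ℝ) :
    Complex.exp (x * Complex.I) * (starRingEnd ℂ) (Complex.exp (x * Complex.I)) = 1 := by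
  rw [Complex.mul_conj, Complex.normSq_eq_norm_sq, Complex.norm_exp_ofReal_mul_I]; norm_num

theorem Complex.exp_ofReal_mul_I_add_conj (x : ℝ) :
    Complex.exp (x * Complex.I) + (starRingEnd ℂ) (Complex.exp (x * Complex.I)) =
      2 - 16 * Complex.sin (x / 4) ^ 2 * Complex.cos (x / 4) ^ 2 := by
  rw [Complex.add_conj, Complex.exp_ofReal_mul_I_re]
  push_cast
  rw [show (x : ℂ) = 2 * (2 * (x / 4)) by ring, Complex.cos_two_mul_eq_one_sub,
    Complex.sin_two_mul]
  ring_nf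

theorem reindex_rho_omega (ω : ℝ) :
    reindex (finProdFinEquiv : Fin 2 × Fin 2 ≃ Fin 4) finProdFinEquiv
        ((1 / 2 : ℂ) • (rho0 + rho1 ω)) =
      !![1/4, 1/8, 1/8, 0;
         1/8, 1/4, 0, (starRingEnd ℂ) (Complex.exp (ω * Complex.I)) / 8;
         1/8, 0, 1/4, 1/8;
         0, Complex.exp (ω * Complex.I) / 8, 1/8, 1/4] := by
  have hs : ((Real.sqrt 2 : ℝ) : ℂ) ^ 2 = 2 := by
    rw [← Complex.ofReal_pow, Real.sq_sqrt zero_le_two]; norm_num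
  have hz := Complex.exp_ofReal_mul_I_mul_conj ω
  ext i j
  fin_cases i <;> fin_cases j <;>
    simp [rho0, rho1, outer, ket0, ket1, ketPlus, ketChi, finProdFinEquiv, Fin.divNat,
      Fin.modNat] <;>
    grind

theorem charpoly_rho_omega (ω : ℝ) :
    ((1 / 2 : ℂ) • (rho0 + rho1 ω)).charpoly =
      (({(1 + Real.cos (ω / 4)) / 4, (1 - Real.cos (ω / 4)) / 4,
          (1 + Real.sin (ω / 4)) / 4, (1 - Real.sin (ω / 4)) / 4} : Multiset ℝ).map
        fun a : ℝ => X - C (a : ℂ)).prod := by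
  rw [← charpoly_reindex finProdFinEquiv, reindex_rho_omega]
  set z := Complex.exp (ω * Complex.I)
  have hz : z * (starRingEnd ℂ) z = 1 := Complex.exp_ofReal_mul_I_mul_conj ω
  have hsum := Complex.exp_ofReal_mul_I_add_conj ω
  have hcs := Complex.cos_sq_add_sin_sq (ω / 4 : ℂ)
  apply Polynomial.funext
  intro x
  have hxN : scalar (Fin 4) x - !![1/4, 1/8, 1/8, 0;
         1/8, 1/4, 0, (starRingEnd ℂ) z / 8;
         1/8, 0, 1/4, 1/8;
         0, z / 8, 1/8, 1/4] = !![x - 1/4, -(1/8), -(1/8), 0;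
         -(1/8), x - 1/4, 0, -((starRingEnd ℂ) z / 8);
         -(1/8), 0, x - 1/4, -(1/8);
         0, -(z / 8), -(1/8), x - 1/4] := by
    ext i j
    fin_cases i <;> fin_cases j <;> simp
  rw [eval_charpoly, hxN]
  eval_det
  simp only [Multiset.insert_eq_cons, Multiset.map_cons, Multiset.map_singleton,
    Multiset.prod_cons, Multiset.prod_singleton, eval_mul, eval_sub, eval_X, eval_C]
  push_cast
  linear_combination ((1 : ℂ) / 4096 - (x - 1 / 4) ^ 2 / 64) * hz + ((x - 1 / 4) ^ 2 / 16) * hcs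
    - (1 / 4096) * hsum

/-- the eigenvalues of `ρ(ω) = (1/2)(ρ₀ + ρ₁)` are
`(1 ± cos(ω/4))/4` and `(1 ± sin(ω/4))/4`. -/
theorem rho_omega_eigenvalues (ω : ℝ) :
    ∃ h : ((1 / 2 : ℂ) • (rho0 + rho1 ω)).IsHermitian,
      Finset.univ.val.map h.eigenvalues =
        ({(1 + Real.cos (ω / 4)) / 4, (1 - Real.cos (ω / 4)) / 4,
          (1 + Real.sin (ω / 4)) / 4, (1 - Real.sin (ω / 4)) / 4} : Multiset ℝ) :=
  ⟨open ComplexOrder in (posSemidef_rho_omega ω).isHermitian,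
    IsHermitian.eigenvalues_eq_of_charpoly_eq _ (charpoly_rho_omega ω)⟩

end
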